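/- For every natural number m with m ≥ 2, the sum over j from 1 to m−1 of 1/sin⁴(πj/m) equals (m⁴ + 10m² − 11)/45. -/

import Mathlib

/-!
For a nontrivial `m`-th root of unity `ω`, the second difference of `k(m - k)` being constant
gives `(1 - ω)² ∑_{k<m} k(m - k) ωᵏ = 2mω`, while `(1 - e^{2iθ})² = -4 sin²θ e^{2iθ}`. Hence
`csc²(πj/m) = -(2/m) ∑_{k<m} k(m - k) ζ^{jk}` with `ζ = e^{2πi/m}`: the cosecant squares are the
discrete Fourier coefficients of the quadratic weight `k(m - k)`. Parseval's identity over
`ℤ/mℤ` turns `∑_{j=1}^{m-1} csc⁴(πj/m)` into `(4/m²)(m ∑ k²(m - k)² - (∑ k(m - k))²)`, the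
subtracted square being the coefficient at `j = 0`, and the two polynomial sums are elementary.
-/

open Real Finset

section PolynomialSums

variable {R : Type*} [CommRing R]

theorem one_sub_sq_mul_sum_range_mul_pow (x : R) (n : ℕ) :
    (1 - x) ^ 2 * ∑ k ∈ range n, (k : R) * x ^ k = x - n * x ^ n + (n - 1) * x ^ (n + 1) := by
  induction n with
  | zero => simp
  | succ n ih => rw [sum_range_succ, mul_add, ih]; push_cast; ring

theorem one_sub_sq_mul_sum_range_mul_sub_mul_pow (x : R) (n : ℕ) :
    (1 - x) ^ 2 * ∑ k ∈ range n, (k : R) * (n - k) * x ^ k + 2 * x * ∑ k ∈ range n, x ^ k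
      = n * x * (1 + x ^ n) + x * (1 - x ^ n) := by
  induction n with
  | zero => simp
  | succ n ih =>
    have hsplit : ∑ k ∈ range (n + 1), (k : R) * (↑(n + 1) - k) * x ^ k
        = ∑ k ∈ range n, (k : R) * (n - k) * x ^ k + ∑ k ∈ range (n + 1), (k : R) * x ^ k :=
      calc ∑ k ∈ range (n + 1), (k : R) * (↑(n + 1) - k) * x ^ k
          = ∑ k ∈ range (n + 1), ((k : R) * (n - k) * x ^ k + k * x ^ k) :=
            sum_congr rfl fun k _ => by push_cast; ring
        _ = _ := by
            rw [sum_add_distrib, sum_range_succ (fun k => (k : R) * (n - k) * x ^ k)]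
            simp
    rw [hsplit, mul_add, one_sub_sq_mul_sum_range_mul_pow, sum_range_succ, mul_add]
    push_cast
    linear_combination ih

theorem one_sub_sq_mul_sum_range_mul_sub_mul_pow_of_pow_eq_one [IsDomain R] {ω : R} {n : ℕ}
    (hω : ω ^ n = 1) (hω₁ : ω ≠ 1) :
    (1 - ω) ^ 2 * ∑ k ∈ range n, (k : R) * (n - k) * ω ^ k = 2 * n * ω := by
  have hgeom : ∑ k ∈ range n, ω ^ k = 0 := by
    have h := geom_sum_mul ω n
    rw [hω, sub_self, mul_eq_zero] at h
    exact h.resolve_right (sub_ne_zero.2 hω₁)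
  linear_combination
    one_sub_sq_mul_sum_range_mul_sub_mul_pow ω n - 2 * ω * hgeom + n * ω * hω - ω * hω

theorem six_mul_sum_range_mul_sub (x : R) (n : ℕ) :
    6 * ∑ k ∈ range n, (k : R) * (x - k) = n * (n - 1) * (3 * x - 2 * n + 1) := by
  induction n with
  | zero => simp
  | succ n ih => rw [sum_range_succ, mul_add, ih]; push_cast; ring

theorem thirty_mul_sum_range_mul_sub_sq (x : R) (n : ℕ) :
    30 * ∑ k ∈ range n, ((k : R) * (x - k)) ^ 2
      = (n - 1) * n * (5 * x ^ 2 * (2 * n - 1) - 15 * x * n * (n - 1)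
          + (2 * n - 1) * (3 * n ^ 2 - 3 * n - 1)) := by
  induction n with
  | zero => simp
  | succ n ih => rw [sum_range_succ, mul_add, ih]; push_cast; ring

end PolynomialSums

namespace IsPrimitiveRoot

variable {K : Type*} [Field K] {ζ : K} {m : ℕ}

theorem sum_pow_mul_inv_pow (hζ : IsPrimitiveRoot ζ m) {k l : ℕ} (hk : k < m) (hl : l < m) :
    ∑ j ∈ range m, ζ ^ (j * k) * ζ⁻¹ ^ (j * l) = if k = l then (m : K) else 0 := by
  have hζ₀ : ζ ≠ 0 := hζ.ne_zero (by omega)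
  simp_rw [mul_comm _ k, mul_comm _ l, pow_mul, ← mul_pow, inv_pow]
  split_ifs with hkl
  · simp [hkl, hζ₀]
  · have hω₁ : ζ ^ k * (ζ ^ l)⁻¹ ≠ 1 := by
      rw [Ne, mul_inv_eq_one₀ (pow_ne_zero _ hζ₀)]
      exact fun h => hkl (hζ.pow_inj hk hl h)
    rw [geom_sum_eq hω₁, mul_pow, inv_pow, ← pow_mul, ← pow_mul, mul_comm k, mul_comm l,
      pow_mul, pow_mul, hζ.pow_eq_one, one_pow, one_pow]
    simp

theorem sum_mul_sum_inv (hζ : IsPrimitiveRoot ζ m) (a b : ℕ → K) :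
    ∑ j ∈ range m, (∑ k ∈ range m, a k * ζ ^ (j * k)) * ∑ l ∈ range m, b l * ζ⁻¹ ^ (j * l)
      = m * ∑ k ∈ range m, a k * b k := by
  calc ∑ j ∈ range m, (∑ k ∈ range m, a k * ζ ^ (j * k)) * ∑ l ∈ range m, b l * ζ⁻¹ ^ (j * l)
      = ∑ k ∈ range m, ∑ l ∈ range m,
          a k * b l * ∑ j ∈ range m, ζ ^ (j * k) * ζ⁻¹ ^ (j * l) := by
        simp_rw [sum_mul_sum, mul_sum]
        rw [sum_comm]
        refine sum_congr rfl fun k _ => ?_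
        rw [sum_comm]
        exact sum_congr rfl fun l _ => sum_congr rfl fun j _ => by ring
    _ = ∑ k ∈ range m, ∑ l ∈ range m, if k = l then m * (a k * b k) else 0 :=
        sum_congr rfl fun k hk => sum_congr rfl fun l hl => by
          rw [hζ.sum_pow_mul_inv_pow (mem_range.1 hk) (mem_range.1 hl)]
          split_ifs with h <;> simp [h, mul_comm]
    _ = m * ∑ k ∈ range m, a k * b k := by
        rw [mul_sum]
        exact sum_congr rfl fun k hk => by rw [sum_ite_eq, if_pos hk]

end IsPrimitiveRoot

namespace Complex

theorem one_sub_exp_two_mul_I_sq (θ : ℂ) :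
    (1 - exp (2 * θ * I)) ^ 2 = -4 * sin θ ^ 2 * exp (2 * θ * I) := by
  have hexp : exp (2 * θ * I) = exp (θ * I) ^ 2 := by rw [← exp_nat_mul]; ring_nf
  have hsq : 1 - exp (θ * I) ^ 2 = -2 * sin θ * I * exp (θ * I) := by
    rw [exp_mul_I]
    linear_combination sin θ ^ 2 * I_sq - sin_sq_add_cos_sq θ
  rw [hexp, hsq]
  linear_combination 4 * sin θ ^ 2 * exp (θ * I) ^ 2 * I_sq

theorem sum_range_mul_sub_mul_exp_pow {θ : ℂ} {n : ℕ} (hn : exp (2 * θ * I) ^ n = 1)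
    (hθ : sin θ ≠ 0) :
    ∑ k ∈ range n, (k : ℂ) * (n - k) * exp (2 * θ * I) ^ k = -n / (2 * sin θ ^ 2) := by
  set ω := exp (2 * θ * I)
  have hω₀ : ω ≠ 0 := exp_ne_zero _
  have hsq : (1 - ω) ^ 2 = -4 * sin θ ^ 2 * ω := one_sub_exp_two_mul_I_sq θ
  have hω₁ : ω ≠ 1 := by
    intro h
    simp [h, hθ] at hsq
  have key := one_sub_sq_mul_sum_range_mul_sub_mul_pow_of_pow_eq_one hn hω₁
  rw [hsq] at key
  field_simp
  apply mul_left_cancel₀ hω₀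
  linear_combination (-1 / 2 : ℂ) * key

theorem one_div_sin_pow_four_eq_sum_mul_sum {m j : ℕ} (hj : j ∈ Ico 1 m) :
    1 / sin (π * j / m) ^ 4
      = 4 / m ^ 2 * ((∑ k ∈ range m, (k : ℂ) * (m - k) * exp (2 * π * I / m) ^ (j * k))
          * ∑ k ∈ range m, (k : ℂ) * (m - k) * (exp (2 * π * I / m))⁻¹ ^ (j * k)) := by
  obtain ⟨hj₁, hjm⟩ := mem_Ico.1 hj
  have hζ := isPrimitiveRoot_exp m (by omega)
  have hm₀ : (m : ℂ) ≠ 0 := by exact_mod_cast (by omega : m ≠ 0)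
  have hsin : sin (π * j / m) ≠ 0 := by
    have hj₀ : (0 : ℝ) < j := by exact_mod_cast hj₁
    have hm_pos : (0 : ℝ) < m := by exact_mod_cast (by omega : 0 < m)
    have hlt : π * j / m < π := by
      rw [div_lt_iff₀ hm_pos]
      exact mul_lt_mul_of_pos_left (by exact_mod_cast hjm) pi_pos
    exact_mod_cast (Real.sin_pos_of_pos_of_lt_pi (by positivity) hlt).ne'
  have hpow : exp (2 * π * I / m) ^ j = exp (2 * (π * j / m) * I) := by
    rw [← exp_nat_mul]; ring_nf
  have hpow_inv : (exp (2 * π * I / m))⁻¹ ^ j = exp (2 * -(π * j / m) * I) := by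
    rw [← exp_neg, ← exp_nat_mul]; ring_nf
  simp_rw [pow_mul, hpow, hpow_inv]
  rw [sum_range_mul_sub_mul_exp_pow (by rw [← hpow, pow_right_comm, hζ.pow_eq_one, one_pow]) hsin,
    sum_range_mul_sub_mul_exp_pow
      (by rw [← hpow_inv, pow_right_comm, hζ.inv.pow_eq_one, one_pow])
      (by rwa [sin_neg, neg_ne_zero]),
    sin_neg]
  field_simp
  ring

end Complex

/-- For every integer `m ≥ 2`, `∑_{j=1}^{m-1} 1 / sin⁴(πj/m) = (m⁴ + 10m² − 11)/45`. -/
theorem sum_csc_pow_four (m : ℕ) (hm : 2 ≤ m) :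
    ∑ j ∈ Finset.Icc 1 (m - 1), 1 / (Real.sin (π * j / m)) ^ 4
      = ((m : ℝ) ^ 4 + 10 * m ^ 2 - 11) / 45 := by
  have hm₀ : (m : ℂ) ≠ 0 := by exact_mod_cast (by omega : m ≠ 0)
  have hIcc : Icc 1 (m - 1) = Ico 1 m := by ext; simp; omega
  have hparseval := (Complex.isPrimitiveRoot_exp m (by omega)).sum_mul_sum_inv
    (fun k => (k : ℂ) * (m - k)) (fun k => (k : ℂ) * (m - k))
  rw [sum_range_eq_add_Ico _ (by omega : 0 < m)] at hparseval
  have hS₁ : ∑ k ∈ range m, (k : ℂ) * (m - k) = m * (m ^ 2 - 1) / 6 := by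
    linear_combination six_mul_sum_range_mul_sub (m : ℂ) m / 6
  have hS₂ : ∑ k ∈ range m, ((k : ℂ) * (m - k)) ^ 2 = m * (m ^ 4 - 1) / 30 := by
    linear_combination thirty_mul_sum_range_mul_sub_sq (m : ℂ) m / 30
  apply Complex.ofReal_injective
  push_cast
  rw [hIcc, sum_congr rfl fun j hj => Complex.one_div_sin_pow_four_eq_sum_mul_sum hj, ← mul_sum,
    eq_sub_of_add_eq' hparseval]
  simp only [zero_mul, pow_zero, mul_one, ← sq]
  rw [hS₁, hS₂]
  field_simp
  ring
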